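/- Fix q ∈ ℝ^d with q ≠ 0, η > 0, and x ∈ ℝ^d with p = ⟨q, x⟩ > 0. Consider the logarithmic loss with label y = 1 over linear predictors, ℓ(w) = −ln(⟨q,w⟩) for ⟨q,w⟩ > 0 and ℓ(w) = +∞ otherwise, with conjugate ℓ*(z) = sup_w (⟨z,w⟩ − ℓ(w)), and define H(z) = (η/2)‖x/η − z‖² + ℓ*(z). Let g = −(1/p) q and let z = (1/η) s(1) q where s(1) = (p − √(p² + 2 η ‖q‖²)) / ‖q‖² is the IWA scaling. Then H(z) ≤ H(g). -/

import Mathlib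

open scoped RealInnerProductSpace

/-! On the ray `c • q`, `c < 0`, the conjugate of the log loss is `-1 - log (-c)`, so with
`t = -c` both `H(z)` and `H(g)` equal a common constant plus `p t + (a/2) t² - log t`,
`a = η ‖q‖²`; `g` is the point `t = 1/p` and `z` the positive root of `p t + (a/2) t² = 1`.
At such a root `s = p t ≤ 1` and `a / (2p²) = (1 - s)/s²`, so the claim reduces to
`-log s ≤ 1/s - 1 ≤ (1 - s)/s²`. -/

section Conjugate

variable {E : Type*} [NormedAddCommGroup E] [InnerProductSpace ℝ E]

noncomputable def fenchelConj (f : E → EReal) (z : E) : EReal :=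
  ⨆ w, ((⟪z, w⟫ : ℝ) : EReal) - f w

noncomputable def logLoss (q w : E) : EReal :=
  if 0 < ⟪q, w⟫ then ((-Real.log ⟪q, w⟫ : ℝ) : EReal) else ⊤

lemma Real.mul_add_log_le {c t : ℝ} (hc : c < 0) (ht : 0 < t) :
    c * t + Real.log t ≤ -1 - Real.log (-c) := by
  have h := Real.log_le_sub_one_of_pos (mul_pos ht (neg_pos.2 hc))
  rw [Real.log_mul ht.ne' (neg_ne_zero.2 hc.ne)] at h
  linarith

lemma inner_smul_sub_logLoss_le {q : E} {c : ℝ} (hc : c < 0) (w : E) :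
    ((⟪c • q, w⟫ : ℝ) : EReal) - logLoss q w ≤ ((-1 - Real.log (-c) : ℝ) : EReal) := by
  unfold logLoss
  split_ifs with hw
  · rw [← EReal.coe_sub, EReal.coe_le_coe_iff, real_inner_smul_left]
    linarith [Real.mul_add_log_le hc hw]
  · simp

lemma fenchelConj_logLoss_smul {q : E} (hq : q ≠ 0) {c : ℝ} (hc : c < 0) :
    fenchelConj (logLoss q) (c • q) = ((-1 - Real.log (-c) : ℝ) : EReal) := by
  refine le_antisymm (iSup_le (inner_smul_sub_logLoss_le hc)) ?_
  have hQ : ‖q‖ ^ 2 ≠ 0 := by positivity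
  -- the supremum is attained where `⟪q, w⟫ = -1/c`
  set w := (-(c * ‖q‖ ^ 2))⁻¹ • q
  have hqw : ⟪q, w⟫ = (-c)⁻¹ := by
    rw [real_inner_smul_right, real_inner_self_eq_norm_sq]
    field_simp
  have hzw : ⟪c • q, w⟫ = -1 := by
    rw [real_inner_smul_left, hqw, inv_neg, mul_neg, mul_inv_cancel₀ hc.ne]
  calc ((-1 - Real.log (-c) : ℝ) : EReal) = ((⟪c • q, w⟫ : ℝ) : EReal) - logLoss q w := by
        rw [logLoss, hqw, if_pos (inv_pos.2 (neg_pos.2 hc)), hzw, Real.log_inv, ← EReal.coe_sub]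
        ring_nf
    _ ≤ fenchelConj (logLoss q) (c • q) :=
        le_iSup (fun w ↦ ((⟪c • q, w⟫ : ℝ) : EReal) - logLoss q w) w

lemma half_mul_norm_inv_smul_sub_smul_sq {η : ℝ} (hη : η ≠ 0) (x q : E) (c : ℝ) :
    η / 2 * ‖η⁻¹ • x - c • q‖ ^ 2
      = η / 2 * ‖η⁻¹ • x‖ ^ 2 - c * ⟪q, x⟫ + η * ‖q‖ ^ 2 / 2 * c ^ 2 := by
  rw [norm_sub_sq_real, real_inner_smul_left, real_inner_smul_right, real_inner_comm,
    norm_smul c q, Real.norm_eq_abs, mul_pow, sq_abs]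
  field_simp

lemma half_mul_norm_sq_add_fenchelConj_logLoss_smul {η : ℝ} (hη : η ≠ 0) (x : E) {q : E}
    (hq : q ≠ 0) {c : ℝ} (hc : c < 0) :
    ((η / 2 * ‖η⁻¹ • x - c • q‖ ^ 2 : ℝ) : EReal) + fenchelConj (logLoss q) (c • q)
      = ((η / 2 * ‖η⁻¹ • x‖ ^ 2 - 1
          + (⟪q, x⟫ * -c + η * ‖q‖ ^ 2 / 2 * (-c) ^ 2 - Real.log (-c)) : ℝ) : EReal) := by
  rw [fenchelConj_logLoss_smul hq hc, ← EReal.coe_add, half_mul_norm_inv_smul_sub_smul_sq hη]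
  ring_nf

end Conjugate

lemma Real.neg_log_le_one_sub_div_sq {s : ℝ} (hs : 0 < s) (hs1 : s ≤ 1) :
    -Real.log s ≤ (1 - s) / s ^ 2 :=
  calc -Real.log s = Real.log s⁻¹ := (Real.log_inv s).symm
    _ ≤ s⁻¹ - 1 := Real.log_le_sub_one_of_pos (inv_pos.2 hs)
    _ = (1 - s) * s / s ^ 2 := by field_simp
    _ ≤ (1 - s) / s ^ 2 := by gcongr; nlinarith

lemma mul_add_half_mul_sq_sub_log_le_of_eq_one {p a t : ℝ} (hp : 0 < p) (ha : 0 ≤ a)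
    (ht : 0 < t) (hroot : p * t + a / 2 * t ^ 2 = 1) :
    p * t + a / 2 * t ^ 2 - Real.log t ≤ p * p⁻¹ + a / 2 * p⁻¹ ^ 2 - Real.log p⁻¹ := by
  have hs : 0 < p * t := mul_pos hp ht
  have ha_eq : a / 2 * p⁻¹ ^ 2 = (1 - p * t) / (p * t) ^ 2 := by
    field_simp
    linear_combination 2 * hroot
  have hlog := Real.neg_log_le_one_sub_div_sq hs (by nlinarith [sq_nonneg t])
  rw [Real.log_mul hp.ne' ht.ne'] at hlog
  rw [hroot, mul_inv_cancel₀ hp.ne', ha_eq, Real.log_inv]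
  linarith

lemma positive_root_mul_add_half_mul_sq_eq_one {p a t : ℝ} (ha : 0 < a)
    (ht : t = (Real.sqrt (p ^ 2 + 2 * a) - p) / a) :
    0 < t ∧ p * t + a / 2 * t ^ 2 = 1 := by
  have hR : Real.sqrt (p ^ 2 + 2 * a) ^ 2 = p ^ 2 + 2 * a := Real.sq_sqrt (by positivity)
  have hRp : p < Real.sqrt (p ^ 2 + 2 * a) := by
    nlinarith [Real.sqrt_nonneg (p ^ 2 + 2 * a)]
  refine ⟨ht ▸ div_pos (by linarith) ha, ?_⟩
  subst ht
  field_simp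
  linear_combination hR

/-- The IWA dual vector for the logarithmic loss with label `y = 1` over linear
predictors, `ℓ(w) = -ln(⟨q,w⟩)` for `⟨q,w⟩ > 0` and `+∞` otherwise, satisfies
`H(z) ≤ H(g)`, where `g = -(1/p) q` is the gradient at `x`,
`z = (1/η) s(1) q` with `s(1) = (p - √(p² + 2η‖q‖²))/‖q‖²` the IWA scaling, and
`H(z) = (η/2)‖x/η - z‖² + ℓ*(z)`. -/
theorem iwa_log_loss_H_le
    (d : ℕ) (q : EuclideanSpace ℝ (Fin d)) (hq : q ≠ 0) (η : ℝ) (hη : 0 < η)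
    (x : EuclideanSpace ℝ (Fin d)) (p : ℝ) (hp : p = ⟪q, x⟫) (hppos : 0 < p)
    (ℓ : EuclideanSpace ℝ (Fin d) → EReal)
    (hℓ : ∀ w, ℓ w = if 0 < ⟪q, w⟫ then (((-Real.log ⟪q, w⟫ : ℝ)) : EReal) else ⊤)
    (lstar : EuclideanSpace ℝ (Fin d) → EReal)
    (hlstar : ∀ zz, lstar zz = ⨆ w, ((⟪zz, w⟫ : ℝ) : EReal) - ℓ w)
    (H : EuclideanSpace ℝ (Fin d) → EReal)
    (hH : ∀ zz, H zz = ((η / 2 * ‖η⁻¹ • x - zz‖ ^ 2 : ℝ) : EReal) + lstar zz)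
    (g z : EuclideanSpace ℝ (Fin d))
    (hg : g = (-p⁻¹) • q)
    (hz : z = (η⁻¹ * ((p - Real.sqrt (p ^ 2 + 2 * η * ‖q‖ ^ 2)) / ‖q‖ ^ 2)) • q) :
    H z ≤ H g := by
  have hlstar' : lstar = fenchelConj (logLoss q) := funext fun zz ↦ (hlstar zz).trans <| by
    rw [show ℓ = logLoss q from funext hℓ, fenchelConj]
  have H_smul : ∀ c < 0, H (c • q) = ((η / 2 * ‖η⁻¹ • x‖ ^ 2 - 1
      + (p * -c + η * ‖q‖ ^ 2 / 2 * (-c) ^ 2 - Real.log (-c)) : ℝ) : EReal) := fun c hc ↦ by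
    rw [hH, hlstar', hp]
    exact half_mul_norm_sq_add_fenchelConj_logLoss_smul hη.ne' x hq hc
  have ha : 0 < η * ‖q‖ ^ 2 := by positivity
  set t := (Real.sqrt (p ^ 2 + 2 * (η * ‖q‖ ^ 2)) - p) / (η * ‖q‖ ^ 2) with ht_def
  obtain ⟨ht, hroot⟩ := positive_root_mul_add_half_mul_sq_eq_one ha ht_def
  have hz' : z = (-t) • q := by
    rw [hz, mul_assoc 2 η]
    congr 1
    rw [ht_def]
    field_simp
    ring
  rw [hz', hg, H_smul _ (neg_neg_of_pos ht), H_smul _ (neg_neg_of_pos (inv_pos.2 hppos)),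
    EReal.coe_le_coe_iff, neg_neg, neg_neg]
  linarith [mul_add_half_mul_sq_sub_log_le_of_eq_one hppos ha.le ht hroot]
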